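/- arXiv:2407.00642 — 2 statements merged into one kernel-verified Lean document; each statement's English description precedes it below -/
import Mathlib

section
/- Let k be an integer with k > 1, let z ∈ ℤ, and let l, t ∈ ℤ[1/k]. Then l·z = t if and only if for every integer n the element (k^n − 1)² divides l·(k^{n·z} − 1) − t·(k^n − 1) in the ring ℤ[1/k]. -/
/-!
The identity `u ^ z - 1 - z (u - 1) ≡ 0 mod (u - 1)²`, valid for any unit `u` of a commutative
ring, applied to `u = k ^ n` in `ℤ[1/k]`, gives `l (k^{nz} - 1) - t (k^n - 1) ≡ (l z - t)(k^n - 1)`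
modulo `(k^n - 1)²`. So the congruences say exactly that `k^n - 1` divides `d = l z - t` for all
`n ≥ 1`. Clearing denominators, `d k^M = a` is an integer, and as `k^n - 1` is coprime to `k` it
divides `a`; taking `n` large forces `a = 0`.
-/

/-- The subring `ℤ[1/k] = {z·k^i : z, i ∈ ℤ}` of `ℚ`, as a set. -/
def zkSet (k : ℤ) : Set ℚ := {q | ∃ z i : ℤ, q = (z : ℚ) * (k : ℚ) ^ i}

theorem sub_one_sq_dvd_pow_sub_one_sub_mul {R : Type*} [CommRing R] (x : R) (m : ℕ) :
    (x - 1) ^ 2 ∣ x ^ m - 1 - m * (x - 1) := by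
  induction m with
  | zero => simp
  | succ m ih =>
    have step : x ^ (m + 1) - 1 - (m + 1 : ℕ) * (x - 1)
        = (x ^ m - 1 - m * (x - 1)) + (x - 1) * (x ^ m - 1) := by
      push_cast; ring
    rw [step]
    exact dvd_add ih (sq (x - 1) ▸ mul_dvd_mul_left _ (sub_one_dvd_pow_sub_one x m))

theorem Units.sub_one_sq_dvd_zpow_sub_one_sub_mul {R : Type*} [CommRing R] (u : Rˣ) (z : ℤ) :
    ((u : R) - 1) ^ 2 ∣ ((u ^ z : Rˣ) : R) - 1 - z * ((u : R) - 1) := by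
  obtain ⟨m, rfl | rfl⟩ := Int.eq_nat_or_neg z
  · simpa using sub_one_sq_dvd_pow_sub_one_sub_mul (u : R) m
  · set v : R := ((u⁻¹ : Rˣ) : R)
    have huv : (u : R) * v = 1 := u.mul_inv
    -- `(u - 1)²` and `(u⁻¹ - 1)²` are associated, and `u + u⁻¹ - 2 = u⁻¹ (u - 1)²`.
    have hassoc : ((u : R) - 1) ^ 2 ∣ (v - 1) ^ 2 :=
      ⟨v ^ 2, by linear_combination -((u : R) * v - 2 * v + 1) * huv⟩
    have hrest : ((u : R) - 1) ^ 2 ∣ (m : R) * ((u : R) - 1 + (v - 1)) :=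
      Dvd.dvd.mul_left ⟨v, by linear_combination (2 - (u : R)) * huv⟩ _
    have hsplit : ((u ^ (-(m : ℤ)) : Rˣ) : R) - 1 - ((-(m : ℤ) : ℤ) : R) * ((u : R) - 1)
        = (v ^ m - 1 - m * (v - 1)) + m * ((u : R) - 1 + (v - 1)) := by
      rw [zpow_neg, zpow_natCast, ← inv_pow, Units.val_pow_eq_pow_val]
      push_cast; ring
    rw [hsplit]
    exact dvd_add (hassoc.trans (sub_one_sq_dvd_pow_sub_one_sub_mul v m)) hrest

theorem isCoprime_pow_sub_one_self {R : Type*} [CommRing R] (x : R) {n : ℕ} (hn : n ≠ 0) :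
    IsCoprime (x ^ n - 1) x :=
  ⟨-1, x ^ (n - 1), by rw [← pow_succ, Nat.sub_add_cancel (Nat.one_le_iff_ne_zero.mpr hn)]; ring⟩

section zkSet

variable {k : ℤ}

theorem mem_zkSet_iff (hk : k ≠ 0) {q : ℚ} :
    q ∈ zkSet k ↔ ∃ (a : ℤ) (M : ℕ), q * (k : ℚ) ^ M = a := by
  have hk' : (k : ℚ) ≠ 0 := Int.cast_ne_zero.mpr hk
  constructor
  · rintro ⟨z, i, rfl⟩
    refine ⟨z * k ^ (i + i.natAbs).toNat, i.natAbs, ?_⟩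
    rw [mul_assoc, ← zpow_natCast, ← zpow_add₀ hk', Int.cast_mul, Int.cast_pow, ← zpow_natCast]
    congr 2
    omega
  · rintro ⟨a, M, h⟩
    exact ⟨a, -M, by rw [← h, zpow_neg, zpow_natCast, mul_inv_cancel_right₀ (pow_ne_zero _ hk')]⟩

def zkSubring (k : ℤ) (hk : k ≠ 0) : Subring ℚ where
  carrier := zkSet k
  zero_mem' := ⟨0, 0, by simp⟩
  one_mem' := ⟨1, 0, by simp⟩
  neg_mem' := by
    rintro _ ⟨z, i, rfl⟩
    exact ⟨-z, i, by push_cast; ring⟩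
  add_mem' := by
    intro p q hp hq
    obtain ⟨a, M, hp⟩ := (mem_zkSet_iff hk).mp hp
    obtain ⟨b, N, hq⟩ := (mem_zkSet_iff hk).mp hq
    refine (mem_zkSet_iff hk).mpr ⟨a * k ^ N + b * k ^ M, M + N, ?_⟩
    push_cast
    linear_combination (k : ℚ) ^ N * hp + (k : ℚ) ^ M * hq
  mul_mem' := by
    intro p q hp hq
    obtain ⟨a, M, hp⟩ := (mem_zkSet_iff hk).mp hp
    obtain ⟨b, N, hq⟩ := (mem_zkSet_iff hk).mp hq
    refine (mem_zkSet_iff hk).mpr ⟨a * b, M + N, ?_⟩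
    push_cast
    linear_combination q * (k : ℚ) ^ N * hp + a * hq

def zkUnit (k : ℤ) (hk : k ≠ 0) : (zkSubring k hk)ˣ where
  val := ⟨k, ⟨k, 0, by simp⟩⟩
  inv := ⟨(k : ℚ)⁻¹, ⟨1, -1, by simp⟩⟩
  val_inv := Subtype.ext (mul_inv_cancel₀ (Int.cast_ne_zero.mpr hk))
  inv_val := Subtype.ext (inv_mul_cancel₀ (Int.cast_ne_zero.mpr hk))

theorem coe_zkUnit_zpow (hk : k ≠ 0) (m : ℤ) :
    (((zkUnit k hk ^ m : (zkSubring k hk)ˣ) : zkSubring k hk) : ℚ) = (k : ℚ) ^ m := by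
  change ((Units.map (zkSubring k hk).subtype.toMonoidHom (zkUnit k hk ^ m) : ℚˣ) : ℚ) = _
  rw [map_zpow, Units.val_zpow_eq_zpow_val]
  rfl

theorem exists_mem_zkSet_zpow_sub_one_sub_mul (hk : k ≠ 0) (n z : ℤ) :
    ∃ c ∈ zkSet k, (k : ℚ) ^ (n * z) - 1 - z * ((k : ℚ) ^ n - 1) = ((k : ℚ) ^ n - 1) ^ 2 * c := by
  obtain ⟨c, hc⟩ := Units.sub_one_sq_dvd_zpow_sub_one_sub_mul (zkUnit k hk ^ n) z
  refine ⟨c, c.2, ?_⟩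
  have := congrArg ((↑) : zkSubring k hk → ℚ) hc
  simpa [← zpow_mul, coe_zkUnit_zpow] using this

theorem eq_zero_of_forall_pow_sub_one_dvd (hk : 1 < k) {d : ℚ} (hd : d ∈ zkSet k)
    (h : ∀ n : ℕ, n ≠ 0 → ∃ c ∈ zkSet k, d = ((k : ℚ) ^ n - 1) * c) : d = 0 := by
  have hk0 : k ≠ 0 := by omega
  obtain ⟨a, M, ha⟩ := (mem_zkSet_iff hk0).mp hd
  suffices a = 0 by simpa [this, hk0] using ha
  set n := a.natAbs + 1
  obtain ⟨c, hc, hdc⟩ := h n (by omega)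
  obtain ⟨b, N, hb⟩ := (mem_zkSet_iff hk0).mp hc
  have hint : a * k ^ N = (k ^ n - 1) * (b * k ^ M) := by
    have : (a : ℚ) * (k : ℚ) ^ N = ((k : ℚ) ^ n - 1) * (b * (k : ℚ) ^ M) := by
      rw [← ha, ← hb, hdc]; ring
    exact_mod_cast this
  have hdvd : k ^ n - 1 ∣ a :=
    ((isCoprime_pow_sub_one_self k (by omega)).pow_right.dvd_of_dvd_mul_right) ⟨_, hint⟩
  have hlt : (n : ℤ) < k ^ n :=
    calc (n : ℤ) < 2 ^ n := by exact_mod_cast n.lt_two_pow_self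
      _ ≤ k ^ n := pow_le_pow_left₀ (by norm_num) (by omega) n
  exact Int.eq_zero_of_dvd_of_natAbs_lt_natAbs hdvd (by omega)

end zkSet

/-- **Corollary 6.** For `k > 1`, `z ∈ ℤ` and `l, t ∈ ℤ[1/k]`: `l·z = t` iff for every
integer `n` the element `(k^n - 1)²` divides `l·(k^{n·z} - 1) - t·(k^n - 1)` in `ℤ[1/k]`. -/
theorem mul_int_eq_iff_congruences (k : ℤ) (hk : 1 < k) (z : ℤ) (l t : ℚ)
    (hl : l ∈ zkSet k) (ht : t ∈ zkSet k) :
    l * (z : ℚ) = t ↔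
      ∀ n : ℤ, ∃ c ∈ zkSet k,
        l * ((k : ℚ) ^ (n * z) - 1) - t * ((k : ℚ) ^ n - 1) = ((k : ℚ) ^ n - 1) ^ 2 * c := by
  have hk0 : k ≠ 0 := by omega
  set S := zkSubring k hk0
  constructor
  · rintro rfl n
    obtain ⟨c, hc, hkey⟩ := exists_mem_zkSet_zpow_sub_one_sub_mul hk0 n z
    exact ⟨l * c, S.mul_mem hl hc, by linear_combination l * hkey⟩
  · intro h
    rw [← sub_eq_zero]
    refine eq_zero_of_forall_pow_sub_one_dvd hk
      (S.sub_mem (S.mul_mem hl (intCast_mem S z)) ht) fun n hn ↦ ?_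
    obtain ⟨c, hc, hcong⟩ := h n
    obtain ⟨c₀, hc₀, hkey⟩ := exists_mem_zkSet_zpow_sub_one_sub_mul hk0 n z
    have hkn : (k : ℚ) ^ n - 1 ≠ 0 :=
      sub_ne_zero.mpr (one_lt_pow₀ (by exact_mod_cast hk) hn).ne'
    refine ⟨c - l * c₀, S.sub_mem hc (S.mul_mem hl hc₀), ?_⟩
    refine mul_left_cancel₀ hkn ?_
    simp only [zpow_natCast] at hcong hkey
    linear_combination hcong - l * hkey
end

section
/- Let k be an integer with k > 1, let b₁ ∈ Ab, and let m, n be integers with n ≠ 0. Then n divides m in ℤ if and only if for every c ∈ A there exists u ∈ A such that [b₁^{m}, c] = [b₁^{n}, u] in G = ℤ[1/k] ⋊ ℤ, where [x, y] = x⁻¹y⁻¹xy. -/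
theorem zkSet_neg {k : ℤ} {q : ℚ} (hq : q ∈ zkSet k) : -q ∈ zkSet k := by
  obtain ⟨z, i, rfl⟩ := hq
  exact ⟨-z, i, by push_cast; ring⟩

theorem zkSet_mul_zpow {k : ℤ} (hk : (k : ℚ) ≠ 0) {q : ℚ} (hq : q ∈ zkSet k) (j : ℤ) :
    q * (k : ℚ) ^ j ∈ zkSet k := by
  obtain ⟨z, i, rfl⟩ := hq
  exact ⟨z, i + j, by rw [zpow_add₀ hk]; ring⟩

theorem zkSet_add {k : ℤ} (hk : (k : ℚ) ≠ 0) {p q : ℚ}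
    (hp : p ∈ zkSet k) (hq : q ∈ zkSet k) : p + q ∈ zkSet k := by
  obtain ⟨z₁, i₁, rfl⟩ := hp
  obtain ⟨z₂, i₂, rfl⟩ := hq
  rcases le_total i₁ i₂ with h | h
  · refine ⟨z₁ + z₂ * k ^ (i₂ - i₁).toNat, i₁, ?_⟩
    have hpow : ((k : ℚ)) ^ ((i₂ - i₁).toNat) = (k : ℚ) ^ (i₂ - i₁) := by
      rw [← zpow_natCast, Int.toNat_of_nonneg (by omega)]
    push_cast
    rw [hpow]
    have e : (k : ℚ) ^ (i₂ - i₁) * (k : ℚ) ^ i₁ = (k : ℚ) ^ i₂ := by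
      rw [← zpow_add₀ hk, show i₂ - i₁ + i₁ = i₂ from by omega]
    linear_combination (-(z₂ : ℚ)) * e
  · refine ⟨z₂ + z₁ * k ^ (i₁ - i₂).toNat, i₂, ?_⟩
    have hpow : ((k : ℚ)) ^ ((i₁ - i₂).toNat) = (k : ℚ) ^ (i₁ - i₂) := by
      rw [← zpow_natCast, Int.toNat_of_nonneg (by omega)]
    push_cast
    rw [hpow]
    have e : (k : ℚ) ^ (i₁ - i₂) * (k : ℚ) ^ i₂ = (k : ℚ) ^ i₁ := by
      rw [← zpow_add₀ hk, show i₁ - i₂ + i₂ = i₁ from by omega]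
    linear_combination (-(z₁ : ℚ)) * e

/-- The underlying set of the semidirect product `G = ℤ[1/k] ⋊ ℤ` (modelled inside
`ℚ × ℤ`): pairs `(y, m)` with multiplication `(y₁,m₁)(y₂,m₂) = (y₁ + y₂·k^{-m₁}, m₁+m₂)`. -/
@[ext]
structure BSQ (k : ℤ) : Type where
  y : ℚ
  m : ℤ

namespace BSQ

variable {k : ℤ}

instance : Mul (BSQ k) := ⟨fun g h => ⟨g.y + h.y * (k : ℚ) ^ (-g.m), g.m + h.m⟩⟩
instance : One (BSQ k) := ⟨⟨0, 0⟩⟩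
instance : Inv (BSQ k) := ⟨fun g => ⟨-g.y * (k : ℚ) ^ g.m, -g.m⟩⟩

@[simp] theorem mul_y (g h : BSQ k) : (g * h).y = g.y + h.y * (k : ℚ) ^ (-g.m) := rfl
@[simp] theorem mul_m (g h : BSQ k) : (g * h).m = g.m + h.m := rfl
@[simp] theorem one_y : (1 : BSQ k).y = 0 := rfl
@[simp] theorem one_m : (1 : BSQ k).m = 0 := rfl
@[simp] theorem inv_y (g : BSQ k) : g⁻¹.y = -g.y * (k : ℚ) ^ g.m := rfl
@[simp] theorem inv_m (g : BSQ k) : g⁻¹.m = -g.m := rfl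

theorem kq_ne_zero [Fact (1 < k)] : (k : ℚ) ≠ 0 := by
  have h : (1 : ℤ) < k := Fact.out
  have h' : (k : ℤ) ≠ 0 := by omega
  exact_mod_cast h'

private theorem mul_assoc' [Fact (1 < k)] (a b c : BSQ k) : a * b * c = a * (b * c) := by
  ext
  · simp only [mul_y, mul_m, neg_add, zpow_add₀ (kq_ne_zero (k := k))]
    ring
  · simp only [mul_m]
    ring

private theorem one_mul' [Fact (1 < k)] (a : BSQ k) : 1 * a = a := by
  ext <;> simp

private theorem mul_one' [Fact (1 < k)] (a : BSQ k) : a * 1 = a := by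
  ext <;> simp

private theorem inv_mul_cancel' [Fact (1 < k)] (a : BSQ k) : a⁻¹ * a = 1 := by
  ext
  · simp only [mul_y, inv_y, inv_m, one_y, neg_neg]
    ring
  · simp only [mul_m, inv_m, one_m]
    ring

/-- The group structure on `ℤ[1/k] ⋊ ℤ` (here on the ambient `ℚ ⋊ ℤ`). -/
instance [Fact (1 < k)] : Group (BSQ k) where
  mul := (· * ·)
  one := 1
  inv := Inv.inv
  mul_assoc := mul_assoc'
  one_mul := one_mul'
  mul_one := mul_one'
  inv_mul_cancel := inv_mul_cancel'

end BSQ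

/-- The group `G = ℤ[1/k] ⋊ ℤ`, as the subgroup of `ℚ ⋊ ℤ` of pairs whose first
coordinate lies in `ℤ[1/k]`. -/
def bsSubgroup (k : ℤ) [Fact (1 < k)] : Subgroup (BSQ k) where
  carrier := {g | g.y ∈ zkSet k}
  one_mem' := ⟨0, 0, by norm_num⟩
  mul_mem' := by
    intro a b ha hb
    exact zkSet_add BSQ.kq_ne_zero ha (zkSet_mul_zpow BSQ.kq_ne_zero hb _)
  inv_mem' := by
    intro a ha
    exact zkSet_mul_zpow BSQ.kq_ne_zero (zkSet_neg ha) _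

theorem mem_bsSubgroup {k : ℤ} [Fact (1 < k)] {g : BSQ k} (h : g.y ∈ zkSet k) :
    g ∈ bsSubgroup k := h

/-- The set `A = {(y,0) : y ∈ ℤ[1/k]}`. -/
def aSet (k : ℤ) : Set (BSQ k) := {g | g.y ∈ zkSet k ∧ g.m = 0}

/-- The set `Ab = {(y,1) : y ∈ ℤ[1/k]}`. -/
def abSet (k : ℤ) : Set (BSQ k) := {g | g.y ∈ zkSet k ∧ g.m = 1}

/-- The commutator `[x, y] = x⁻¹ y⁻¹ x y` (the paper's convention). -/
def gcomm {k : ℤ} [Fact (1 < k)] (x y : BSQ k) : BSQ k := x⁻¹ * y⁻¹ * x * y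

theorem zkSet_mul {k : ℤ} (hk : (k : ℚ) ≠ 0) {p q : ℚ} (hp : p ∈ zkSet k) (hq : q ∈ zkSet k) :
    p * q ∈ zkSet k := by
  obtain ⟨z₁, i₁, rfl⟩ := hp
  obtain ⟨z₂, i₂, rfl⟩ := hq
  exact ⟨z₁ * z₂, i₁ + i₂, by push_cast; rw [zpow_add₀ hk]; ring⟩

theorem zpow_mem_zkSet (k j : ℤ) : (k : ℚ) ^ j ∈ zkSet k := ⟨1, j, by rw [Int.cast_one, one_mul]⟩

def ZkDvd (k : ℤ) (d x : ℚ) : Prop := ∃ u ∈ zkSet k, x = u * d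

namespace ZkDvd

variable {k : ℤ}

theorem refl (d : ℚ) : ZkDvd k d d := ⟨1, ⟨1, 0, by simp⟩, (one_mul d).symm⟩

theorem zero (d : ℚ) : ZkDvd k d 0 := ⟨0, ⟨0, 0, by simp⟩, (zero_mul d).symm⟩

theorem add (hk : (k : ℚ) ≠ 0) {d x y : ℚ} (hx : ZkDvd k d x) (hy : ZkDvd k d y) :
    ZkDvd k d (x + y) := by
  obtain ⟨u, hu, rfl⟩ := hx
  obtain ⟨v, hv, rfl⟩ := hy
  exact ⟨u + v, zkSet_add hk hu hv, by ring⟩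

theorem mul_left (hk : (k : ℚ) ≠ 0) {d x p : ℚ} (hp : p ∈ zkSet k) (hx : ZkDvd k d x) :
    ZkDvd k d (p * x) := by
  obtain ⟨u, hu, rfl⟩ := hx
  exact ⟨p * u, zkSet_mul hk hp hu, by ring⟩

theorem trans (hk : (k : ℚ) ≠ 0) {d e x : ℚ} (hde : ZkDvd k d e) (hex : ZkDvd k e x) :
    ZkDvd k d x := by
  obtain ⟨u, hu, rfl⟩ := hex
  exact mul_left hk hu hde

theorem int_dvd (hk : (k : ℚ) ≠ 0) {d x : ℤ} (hd : IsCoprime d k) (h : ZkDvd k d x) :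
    d ∣ x := by
  obtain ⟨_, ⟨z, i, rfl⟩, hx⟩ := h
  obtain ⟨j, rfl | rfl⟩ := Int.eq_nat_or_neg i
  · have hx' : (x : ℚ) = ((d * (z * k ^ j) : ℤ) : ℚ) := by
      rw [hx, zpow_natCast]; push_cast; ring
    exact ⟨z * k ^ j, by exact_mod_cast hx'⟩
  · have hx' : (k : ℚ) ^ j * x = d * z := by
      rw [hx, zpow_neg, zpow_natCast]
      field_simp
    exact (hd.pow_right (n := j)).dvd_of_dvd_mul_left ⟨z, by exact_mod_cast hx'⟩

end ZkDvd

-- the kernel of `m ↦ k^m` into the units of `ℤ[1/k]/(d)`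
def zpowKer (k : ℤ) (hk : (k : ℚ) ≠ 0) (d : ℚ) : AddSubgroup ℤ where
  carrier := {m | ZkDvd k d (1 - (k : ℚ) ^ m)}
  zero_mem' := by simpa using ZkDvd.zero d
  add_mem' := by
    intro a b ha hb
    have hsplit : 1 - (k : ℚ) ^ (a + b) = (1 - (k : ℚ) ^ a) + (k : ℚ) ^ a * (1 - (k : ℚ) ^ b) := by
      rw [zpow_add₀ hk]; ring
    show ZkDvd k d _
    rw [hsplit]
    exact ha.add hk (hb.mul_left hk (zpow_mem_zkSet k a))
  neg_mem' := by
    intro a ha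
    have hneg : 1 - (k : ℚ) ^ (-a) = -(k : ℚ) ^ (-a) * (1 - (k : ℚ) ^ a) := by
      have hinv : (k : ℚ) ^ (-a) * (k : ℚ) ^ a = 1 := by
        rw [← zpow_add₀ hk, neg_add_cancel, zpow_zero]
      linear_combination -hinv
    show ZkDvd k d _
    rw [hneg]
    exact ha.mul_left hk (zkSet_neg (zpow_mem_zkSet k _))

theorem self_mem_zpowKer {k : ℤ} (hk : (k : ℚ) ≠ 0) (n : ℤ) :
    n ∈ zpowKer k hk (1 - (k : ℚ) ^ n) :=
  ZkDvd.refl _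

theorem pow_sub_one_dvd_pow_sub_one_iff {k : ℤ} (hk : 1 < k) {a b : ℕ} :
    k ^ a - 1 ∣ k ^ b - 1 ↔ a ∣ b := by
  lift k to ℕ using by omega
  have hk' : 1 < k := by exact_mod_cast hk
  have hcast (c : ℕ) : (k : ℤ) ^ c - 1 = ((k ^ c - 1 : ℕ) : ℤ) := by
    rw [Nat.cast_sub (Nat.one_le_pow _ _ (by omega))]; push_cast; rfl
  rw [hcast, hcast, Int.natCast_dvd_natCast, Nat.dvd_iff_mod_eq_zero,
    Nat.pow_sub_one_mod_pow_sub_one, Nat.sub_eq_zero_iff_le, Nat.dvd_iff_mod_eq_zero]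
  constructor
  · intro h
    by_contra h0
    exact absurd h (not_le.mpr (Nat.one_lt_pow h0 hk'))
  · intro h
    rw [h, pow_zero]

theorem isCoprime_one_sub_pow {k : ℤ} {a : ℕ} (ha : a ≠ 0) : IsCoprime (1 - k ^ a) k :=
  ⟨1, k ^ (a - 1), by rw [← pow_succ, Nat.sub_add_cancel (Nat.one_le_iff_ne_zero.mpr ha)]; ring⟩

theorem zkDvd_one_sub_zpow_iff {k : ℤ} (hk : 1 < k) {m n : ℤ} (hn : n ≠ 0) :
    ZkDvd k (1 - (k : ℚ) ^ n) (1 - (k : ℚ) ^ m) ↔ n ∣ m := by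
  have hk₀ : (k : ℚ) ≠ 0 := by exact_mod_cast (show k ≠ 0 by omega)
  constructor
  · intro h
    have hn' : n ∈ zpowKer k hk₀ (1 - (k : ℚ) ^ (n.natAbs : ℤ)) := by
      rw [← abs_mem_iff, ← Int.natCast_natAbs]
      exact self_mem_zpowKer hk₀ _
    have hm' : (m.natAbs : ℤ) ∈ zpowKer k hk₀ (1 - (k : ℚ) ^ n) := by
      rw [Int.natCast_natAbs, abs_mem_iff]
      exact h
    have hdvd : ZkDvd k ((1 - k ^ n.natAbs : ℤ) : ℚ) ((1 - k ^ m.natAbs : ℤ) : ℚ) := by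
      push_cast
      simpa only [zpow_natCast] using hn'.trans hk₀ hm'
    have hint := hdvd.int_dvd hk₀ (isCoprime_one_sub_pow (Int.natAbs_ne_zero.mpr hn))
    rw [← dvd_neg, neg_sub, ← neg_dvd, neg_sub, pow_sub_one_dvd_pow_sub_one_iff hk] at hint
    exact Int.natAbs_dvd_natAbs.mp hint
  · rintro ⟨t, rfl⟩
    rw [mul_comm, ← smul_eq_mul]
    exact AddSubgroup.zsmul_mem _ (self_mem_zpowKer hk₀ n) t

namespace BSQ

variable {k : ℤ} [Fact (1 < k)]

def mHom : BSQ k →* Multiplicative ℤ where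
  toFun g := .ofAdd g.m
  map_one' := rfl
  map_mul' _ _ := rfl

theorem zpow_m (g : BSQ k) (j : ℤ) : (g ^ j).m = j * g.m := by
  have h := congrArg Multiplicative.toAdd (map_zpow (mHom (k := k)) g j)
  rwa [toAdd_zpow, smul_eq_mul] at h

theorem gcomm_of_m_eq_zero (g c : BSQ k) (hc : c.m = 0) :
    gcomm g c = ⟨c.y * (1 - (k : ℚ) ^ g.m), 0⟩ := by
  ext
  · simp only [gcomm, mul_y, mul_m, inv_y, inv_m, hc, neg_zero, add_zero, neg_neg, zpow_zero,
      neg_add_cancel, mul_one]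
    ring
  · simp only [gcomm, mul_m, inv_m, hc]
    ring

theorem forall_exists_gcomm_eq_iff (g h : BSQ k) :
    (∀ c ∈ aSet k, ∃ u ∈ aSet k, gcomm g c = gcomm h u) ↔
      ZkDvd k (1 - (k : ℚ) ^ h.m) (1 - (k : ℚ) ^ g.m) := by
  constructor
  · intro hc
    obtain ⟨u, ⟨hu, hu0⟩, he⟩ := hc ⟨1, 0⟩ ⟨⟨1, 0, by simp⟩, rfl⟩
    rw [gcomm_of_m_eq_zero _ _ rfl, gcomm_of_m_eq_zero _ _ hu0] at he
    exact ⟨u.y, hu, by simpa using congrArg y he⟩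
  · rintro ⟨w, hw, he⟩ c ⟨hc, hc0⟩
    refine ⟨⟨c.y * w, 0⟩, ⟨zkSet_mul kq_ne_zero hc hw, rfl⟩, ?_⟩
    rw [gcomm_of_m_eq_zero _ _ hc0, gcomm_of_m_eq_zero _ _ rfl, he, mul_assoc]

end BSQ

/-- **Definability of divisibility.** For `b₁ ∈ Ab` and integers `m, n` with `n ≠ 0`:
`n ∣ m` in `ℤ` iff for every `c ∈ A` there exists `u ∈ A` with
`[b₁^m, c] = [b₁^n, u]` in `G = ℤ[1/k] ⋊ ℤ`. -/
theorem dvd_iff_commutator_condition (k : ℤ) [Fact (1 < k)] (b₁ : BSQ k)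
    (hb : b₁ ∈ abSet k) (m n : ℤ) (hn : n ≠ 0) :
    n ∣ m ↔ ∀ c ∈ aSet k, ∃ u ∈ aSet k, gcomm (b₁ ^ m) c = gcomm (b₁ ^ n) u := by
  have hpow (j : ℤ) : (b₁ ^ j).m = j := by rw [BSQ.zpow_m, hb.2, mul_one]
  rw [BSQ.forall_exists_gcomm_eq_iff, hpow, hpow, zkDvd_one_sub_zpow_iff Fact.out hn]
end
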